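/- arXiv:1206.5480 — 2 statements merged into one kernel-verified Lean document; each statement's English description precedes it below -/
import Mathlib

section
/- For every η > 0, the quantity W₁(η) = ∫_{-1}^{1} e^{η z²}(1−z²)(5z²−1) dz is strictly positive. -/
open Real
open MeasureTheory

/-! Since the weight `(1 - z²)(5z² - 1)` has integral zero over `[-1, 1]`, one may replace
`e^{ηz²}` by `e^{ηz²} - e^{η/5}`. Both this factor and `5z² - 1` change sign exactly at `z² = 1/5`,
so the new integrand is nonnegative on `[-1, 1]`, and it is positive at `z = 0`. -/

theorem intervalIntegral.integral_mul_eq_integral_sub_const_mul {f w : ℝ → ℝ} {a b : ℝ}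
    (hw : ∫ x in a..b, w x = 0) (hfw : IntervalIntegrable (fun x => f x * w x) volume a b)
    (hwi : IntervalIntegrable w volume a b) (c : ℝ) :
    ∫ x in a..b, f x * w x = ∫ x in a..b, (f x - c) * w x := by
  simp_rw [sub_mul]
  rw [intervalIntegral.integral_sub hfw (hwi.const_mul c), intervalIntegral.integral_const_mul,
    hw, mul_zero, sub_zero]

theorem integral_one_sub_sq_mul_five_mul_sq_sub_one :
    ∫ z in (-1:ℝ)..1, (1 - z ^ 2) * (5 * z ^ 2 - 1) = 0 := by
  have hexpand : (fun z : ℝ => (1 - z ^ 2) * (5 * z ^ 2 - 1)) =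
      fun z => 6 * z ^ 2 - 5 * z ^ 4 - 1 := by
    ext z; ring
  rw [hexpand, intervalIntegral.integral_sub, intervalIntegral.integral_sub,
    intervalIntegral.integral_const_mul, intervalIntegral.integral_const_mul]
  all_goals norm_num [integral_pow]

theorem exp_sub_exp_mul_one_sub_sq_mul_five_mul_sq_sub_one_nonneg {η z : ℝ} (hη : 0 ≤ η)
    (hz : z ^ 2 ≤ 1) :
    0 ≤ (exp (η * z ^ 2) - exp (η / 5)) * ((1 - z ^ 2) * (5 * z ^ 2 - 1)) := by
  have hmono : Monotone fun t => exp (η * t) :=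
    exp_monotone.comp (monotone_mul_left_of_nonneg hη)
  have hsign : 0 ≤ (exp (η * z ^ 2) - exp (η * (1 / 5))) * (z ^ 2 - 1 / 5) :=
    (monovary_id_iff.2 hmono).sub_mul_sub_nonneg (1 / 5) (z ^ 2)
  rw [mul_one_div] at hsign
  nlinarith [mul_nonneg (sub_nonneg.2 hz) hsign]

/-- For every `η > 0`, `W₁(η) = ∫_{-1}^{1} e^{η z²}(1−z²)(5z²−1) dz > 0`. -/
theorem stmt1 (η : ℝ) (hη : 0 < η) :
    0 < ∫ z in (-1:ℝ)..1, Real.exp (η * z ^ 2) * (1 - z ^ 2) * (5 * z ^ 2 - 1) := by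
  simp_rw [mul_assoc]
  rw [intervalIntegral.integral_mul_eq_integral_sub_const_mul
    integral_one_sub_sq_mul_five_mul_sq_sub_one ((by fun_prop : Continuous _).intervalIntegrable _ _)
    ((by fun_prop : Continuous _).intervalIntegrable _ _) (exp (η / 5))]
  refine intervalIntegral.integral_pos (by norm_num) (by fun_prop)
    (fun z hz => exp_sub_exp_mul_one_sub_sq_mul_five_mul_sq_sub_one_nonneg hη.le
      (by nlinarith [hz.1, hz.2])) ⟨0, by norm_num, ?_⟩
  have : 1 < exp (η / 5) := one_lt_exp_iff.2 (by positivity)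
  norm_num [this]
end

section
/- The function η ↦ e^{−η}·(A₀(η)(A₄(η)−A₆(η)) − A₂(η)(A₂(η)−A₄(η))) is strictly decreasing in η, where A_k(η) = ∫_{-1}^{1} z^k e^{η z²} dz. Indeed its derivative equals −(1/2)∫_{-1}^{1}∫_{-1}^{1} (x²−y²)²(1−x²−y²)² e^{η(x²+y²−1)} dx dy < 0. -/
open Real

/-- `A k η = ∫_{-1}^{1} z^k e^{η z²} dz`. -/
noncomputable def A (k : ℕ) (η : ℝ) : ℝ := ∫ z in (-1:ℝ)..1, z ^ k * Real.exp (η * z ^ 2)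

/-!
Differentiating under the integral sign gives `A k' = A (k + 2)`, so the derivative of the
function is a quadratic form in the moments `A 0, …, A 8`. Expanding `(x²−y²)²(1−x²−y²)²` in
powers of `y²` and then of `x²` identifies this form with `−½` times the double integral, whose
integrand is continuous, nonnegative, and positive at `(1/2, 0)`.
-/

theorem hasDerivAt_integral_mul_exp_mul {f φ : ℝ → ℝ} (hf : Continuous f) (hφ : Continuous φ)
    (a b η : ℝ) :
    HasDerivAt (fun η => ∫ t in a..b, f t * exp (η * φ t))
      (∫ t in a..b, f t * φ t * exp (η * φ t)) η := by
  refine (intervalIntegral.hasDerivAt_integral_of_dominated_loc_of_deriv_le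
    (F := fun η t => f t * exp (η * φ t)) (F' := fun η t => f t * φ t * exp (η * φ t))
    (bound := fun t => |f t * φ t| * exp ((|η| + 1) * |φ t|)) (Metric.ball_mem_nhds η one_pos)
    (.of_forall fun x => (by fun_prop : Continuous _).aestronglyMeasurable)
    ((by fun_prop : Continuous _).intervalIntegrable a b)
    (by fun_prop : Continuous _).aestronglyMeasurable ?_
    ((by fun_prop : Continuous _).intervalIntegrable a b) ?_).2
  · refine .of_forall fun t _ x hx => ?_
    have hxη : |x| ≤ |η| + 1 := by
      have := abs_sub_abs_le_abs_sub x η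
      rw [← Real.dist_eq] at this
      linarith [Metric.mem_ball.1 hx]
    rw [Real.norm_eq_abs, abs_mul (f t * φ t), abs_of_pos (exp_pos _)]
    refine mul_le_mul_of_nonneg_left (exp_le_exp.2 ?_) (abs_nonneg _)
    calc x * φ t ≤ |x| * |φ t| := abs_mul x (φ t) ▸ le_abs_self _
      _ ≤ (|η| + 1) * |φ t| := by gcongr
  · refine .of_forall fun t _ x _ => ?_
    exact ((((hasDerivAt_id' x).mul_const (φ t)).exp).const_mul (f t)).congr_deriv (by ring)

theorem hasDerivAt_A (k : ℕ) (η : ℝ) : HasDerivAt (A k) (A (k + 2) η) η := by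
  convert hasDerivAt_integral_mul_exp_mul (f := (· ^ k)) (φ := (· ^ 2))
    (continuous_pow k) (continuous_pow 2) (-1) 1 η using 1
  · rfl
  · simp_rw [A, ← pow_add]

theorem integral_sum_mul_moment {ι : Type*} (s : Finset ι) (c : ι → ℝ) (k : ι → ℕ) (η : ℝ) :
    ∫ t in (-1:ℝ)..1, ∑ i ∈ s, c i * (t ^ k i * exp (η * t ^ 2)) = ∑ i ∈ s, c i * A (k i) η := by
  rw [intervalIntegral.integral_finsetSum fun i _ =>
    ((by fun_prop : Continuous _).intervalIntegrable _ _)]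
  simp only [intervalIntegral.integral_const_mul, A]

noncomputable def kernel (η x y : ℝ) : ℝ :=
  (x ^ 2 - y ^ 2) ^ 2 * (1 - x ^ 2 - y ^ 2) ^ 2 * exp (η * (x ^ 2 + y ^ 2 - 1))

theorem integral_kernel (η x : ℝ) :
    ∫ y in (-1:ℝ)..1, kernel η x y =
      exp (-η) * exp (η * x ^ 2) *
        ((x ^ 8 - 2 * x ^ 6 + x ^ 4) * A 0 η + (2 * x ^ 4 - 2 * x ^ 2) * A 2 η
          + (1 + 2 * x ^ 2 - 2 * x ^ 4) * A 4 η - 2 * A 6 η + A 8 η) := by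
  have h (y : ℝ) : kernel η x y = exp (-η) * exp (η * x ^ 2) *
      ∑ i : Fin 5, ![x ^ 8 - 2 * x ^ 6 + x ^ 4, 2 * x ^ 4 - 2 * x ^ 2, 1 + 2 * x ^ 2 - 2 * x ^ 4,
        -2, 1] i * (y ^ ![0, 2, 4, 6, 8] i * exp (η * y ^ 2)) := by
    rw [kernel, show η * (x ^ 2 + y ^ 2 - 1) = -η + η * x ^ 2 + η * y ^ 2 by ring, exp_add,
      exp_add]
    simp only [Fin.sum_univ_five, Matrix.cons_val]
    ring
  simp_rw [h, intervalIntegral.integral_const_mul, integral_sum_mul_moment]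
  simp only [Fin.sum_univ_five, Matrix.cons_val]
  ring

theorem integral_integral_kernel (η : ℝ) :
    ∫ x in (-1:ℝ)..1, ∫ y in (-1:ℝ)..1, kernel η x y =
      exp (-η) * (2 * A 0 η * A 8 η - 4 * A 0 η * A 6 η + 2 * A 0 η * A 4 η
        + 4 * A 2 η * A 4 η - 2 * A 2 η ^ 2 - 2 * A 4 η ^ 2) := by
  have h (x : ℝ) : ∫ y in (-1:ℝ)..1, kernel η x y = exp (-η) *
      ∑ i : Fin 5, ![A 4 η - 2 * A 6 η + A 8 η, 2 * A 4 η - 2 * A 2 η,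
        A 0 η + 2 * A 2 η - 2 * A 4 η, -2 * A 0 η, A 0 η] i
        * (x ^ ![0, 2, 4, 6, 8] i * exp (η * x ^ 2)) := by
    rw [integral_kernel]
    simp only [Fin.sum_univ_five, Matrix.cons_val]
    ring
  simp_rw [h, intervalIntegral.integral_const_mul, integral_sum_mul_moment]
  simp only [Fin.sum_univ_five, Matrix.cons_val]
  ring

theorem integral_integral_kernel_pos (η : ℝ) :
    0 < ∫ x in (-1:ℝ)..1, ∫ y in (-1:ℝ)..1, kernel η x y := by
  have hcont : Continuous (Function.uncurry (kernel η)) := by unfold kernel; fun_prop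
  have hnonneg (x y : ℝ) : 0 ≤ kernel η x y := by unfold kernel; positivity
  refine intervalIntegral.integral_pos (by norm_num)
    (intervalIntegral.continuous_parametric_intervalIntegral_of_continuous' hcont _ _).continuousOn
    (fun x _ => intervalIntegral.integral_nonneg (by norm_num) fun y _ => hnonneg x y)
    ⟨1 / 2, by norm_num, ?_⟩
  refine intervalIntegral.integral_pos (by norm_num) (hcont.uncurry_left _).continuousOn
    (fun y _ => hnonneg _ y) ⟨0, by norm_num, ?_⟩
  unfold kernel; positivity

theorem hasDerivAt_exp_neg_mul_moments (η : ℝ) :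
    HasDerivAt (fun η : ℝ => exp (-η) * (A 0 η * (A 4 η - A 6 η) - A 2 η * (A 2 η - A 4 η)))
      (-(1 / 2) * ∫ x in (-1:ℝ)..1, ∫ y in (-1:ℝ)..1, kernel η x y) η := by
  have hA := hasDerivAt_A
  refine ((hasDerivAt_neg η).exp.mul (((hA 0 η).mul ((hA 4 η).sub (hA 6 η))).sub
    ((hA 2 η).mul ((hA 2 η).sub (hA 4 η))))).congr_deriv ?_
  simp only [Pi.mul_apply, Pi.sub_apply]
  rw [integral_integral_kernel]
  ring

/-- The function `η ↦ e^{−η}·(A₀(A₄−A₆) − A₂(A₂−A₄))` is strictly decreasing, and its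
derivative equals `−(1/2)∫∫ (x²−y²)²(1−x²−y²)² e^{η(x²+y²−1)} dx dy < 0`. -/
theorem stmt2 :
    StrictAnti (fun η : ℝ =>
      Real.exp (-η) * (A 0 η * (A 4 η - A 6 η) - A 2 η * (A 2 η - A 4 η))) ∧
    ∀ η : ℝ,
      HasDerivAt (fun η : ℝ =>
          Real.exp (-η) * (A 0 η * (A 4 η - A 6 η) - A 2 η * (A 2 η - A 4 η)))
        (-(1/2) * ∫ x in (-1:ℝ)..1, ∫ y in (-1:ℝ)..1,
          (x ^ 2 - y ^ 2) ^ 2 * (1 - x ^ 2 - y ^ 2) ^ 2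
            * Real.exp (η * (x ^ 2 + y ^ 2 - 1))) η ∧
      -(1/2) * (∫ x in (-1:ℝ)..1, ∫ y in (-1:ℝ)..1,
          (x ^ 2 - y ^ 2) ^ 2 * (1 - x ^ 2 - y ^ 2) ^ 2
            * Real.exp (η * (x ^ 2 + y ^ 2 - 1))) < 0 := by
  have hneg (η : ℝ) : -(1 / 2) * (∫ x in (-1:ℝ)..1, ∫ y in (-1:ℝ)..1, kernel η x y) < 0 := by
    linarith [integral_integral_kernel_pos η]
  exact ⟨strictAnti_of_hasDerivAt_neg hasDerivAt_exp_neg_mul_moments hneg,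
    fun η => ⟨hasDerivAt_exp_neg_mul_moments η, hneg η⟩⟩
end
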